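/- Law of large numbers in Hadamard spaces (Sturm): let (H,d) be a Hadamard space, a₁,…,a_N ∈ H, w₁,…,w_N positive weights with Σₙ wₙ = 1, and Ξ the unique minimizer of x ↦ Σₙ wₙ·d(x,aₙ)². On a probability space, let (Y_k)_{k∈ℕ} be independent H-valued random variables, each taking the value aₙ with probability wₙ for n = 1,…,N. Define S₁ := Y₁ and S_{k+1} := (1 − 1/(k+1))S_k ⊕ (1/(k+1))Y_{k+1} for k ∈ ℕ. Then S_k → Ξ almost surely as k → ∞. -/

import Mathlib

/-!
Write `M k` for the inductive means and `F x = ∑ n, w n * d(x, a n)²`. The CAT(0) inequality at `Ξ`,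
the independence of `M k` from the next sample and the variance inequality
`F x ≥ F Ξ + d(x, Ξ)²` give `𝔼 d(M (k+1), Ξ)² ≤ (1 - t)² 𝔼 d(M k, Ξ)² + t² F Ξ` with
`t = 1/(k+2)`, hence `𝔼 d(M k, Ξ)² ≤ F Ξ / (k+1)`. These bounds are summable along the squares,
so `M (m²) → Ξ` almost surely, and since the samples are bounded, `d(M (k+1), M k) = O(1/k)`
controls the means between consecutive squares.

The geodesic map need not be measurable; `M k` is measurable because the samples a.s. take only
the finitely many values `a n`, so that `M k` is a function of finitely many `Fin N`-valued indices.
-/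

open Filter Topology

/-- A Hadamard space structure on a metric space `H`: a geodesic combination map
`geo x y t = (1-t)x ⊕ ty` satisfying the geodesic axioms and the CAT(0) inequality.
(Completeness is imposed via the `CompleteSpace` instance in the theorems.) -/
structure Hadamard (H : Type*) [MetricSpace H] : Type _ where
  geo : H → H → ℝ → H
  geo_zero : ∀ x y : H, geo x y 0 = x
  geo_one : ∀ x y : H, geo x y 1 = y
  geo_dist : ∀ x y : H, ∀ s ∈ Set.Icc (0 : ℝ) 1, ∀ t ∈ Set.Icc (0 : ℝ) 1,
    dist (geo x y s) (geo x y t) = |s - t| * dist x y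
  cat0 : ∀ z x y : H, ∀ t ∈ Set.Icc (0 : ℝ) 1,
    dist z (geo x y t) ^ 2
      ≤ (1 - t) * dist z x ^ 2 + t * dist z y ^ 2 - t * (1 - t) * dist x y ^ 2

/-- A function `f : H → (-∞,∞]` is (geodesically) convex if along every geodesic
`t ↦ (1-t)x ⊕ ty` it satisfies the convexity inequality. -/
def GeoConvex {H : Type*} [MetricSpace H] (G : Hadamard H) (f : H → EReal) : Prop :=
  ∀ x y : H, ∀ t ∈ Set.Icc (0 : ℝ) 1,
    f (G.geo x y t) ≤ ((1 - t : ℝ) : EReal) * f x + ((t : ℝ) : EReal) * f y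

open MeasureTheory ProbabilityTheory

theorem one_div_add_two_mem_Icc (k : ℕ) : 1 / ((k : ℝ) + 2) ∈ Set.Icc (0 : ℝ) 1 :=
  ⟨by positivity, (div_le_one (by positivity)).2 (by linarith [k.cast_nonneg (α := ℝ)])⟩

namespace Hadamard

variable {H : Type*} [MetricSpace H] (G : Hadamard H)

theorem dist_geo_left {x y : H} {t : ℝ} (ht : t ∈ Set.Icc (0 : ℝ) 1) :
    dist (G.geo x y t) x = t * dist x y := by
  simpa [G.geo_zero, abs_of_nonneg ht.1] using
    G.geo_dist x y t ht 0 ⟨le_rfl, zero_le_one⟩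

theorem dist_geo_le {x y z : H} {r t : ℝ} (ht : t ∈ Set.Icc (0 : ℝ) 1)
    (hx : dist x z ≤ r) (hy : dist y z ≤ r) : dist (G.geo x y t) z ≤ r := by
  have hr : 0 ≤ r := dist_nonneg.trans hx
  have hcat := G.cat0 z x y t ht
  rw [dist_comm z, dist_comm z, dist_comm z] at hcat
  refine le_of_pow_le_pow_left₀ two_ne_zero hr (hcat.trans ?_)
  have hx2 := pow_le_pow_left₀ dist_nonneg hx 2
  have hy2 := pow_le_pow_left₀ dist_nonneg hy 2
  nlinarith [ht.1, ht.2, mul_nonneg (mul_nonneg ht.1 (sub_nonneg.2 ht.2)) (sq_nonneg (dist x y))]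

theorem sum_mul_dist_geo_sq_le {ι : Type*} [Fintype ι] (a : ι → H) {w : ι → ℝ}
    (hw : ∀ i, 0 ≤ w i) (hsum : ∑ i, w i = 1) (x y : H) {t : ℝ} (ht : t ∈ Set.Icc (0 : ℝ) 1) :
    ∑ i, w i * dist (G.geo x y t) (a i) ^ 2 ≤
      (1 - t) * ∑ i, w i * dist x (a i) ^ 2 + t * ∑ i, w i * dist y (a i) ^ 2
        - t * (1 - t) * dist x y ^ 2 := by
  calc ∑ i, w i * dist (G.geo x y t) (a i) ^ 2
      ≤ ∑ i, w i * ((1 - t) * dist x (a i) ^ 2 + t * dist y (a i) ^ 2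
          - t * (1 - t) * dist x y ^ 2) := by
        gcongr with i
        · exact hw i
        · simpa only [dist_comm (a i)] using G.cat0 (a i) x y t ht
    _ = ∑ i, ((1 - t) * (w i * dist x (a i) ^ 2) + t * (w i * dist y (a i) ^ 2)
          - t * (1 - t) * dist x y ^ 2 * w i) := Finset.sum_congr rfl fun i _ => by ring
    _ = _ := by
        rw [Finset.sum_sub_distrib, Finset.sum_add_distrib, ← Finset.mul_sum, ← Finset.mul_sum,
          ← Finset.mul_sum, hsum, mul_one]

theorem sum_mul_dist_sq_add_dist_sq_le (G : Hadamard H) {ι : Type*} [Fintype ι] (a : ι → H)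
    {w : ι → ℝ} (hw : ∀ i, 0 ≤ w i) (hsum : ∑ i, w i = 1) {z : H}
    (hz : ∀ x, ∑ i, w i * dist z (a i) ^ 2 ≤ ∑ i, w i * dist x (a i) ^ 2) (x : H) :
    ∑ i, w i * dist z (a i) ^ 2 + dist x z ^ 2 ≤ ∑ i, w i * dist x (a i) ^ 2 := by
  set F : H → ℝ := fun x => ∑ i, w i * dist x (a i) ^ 2
  -- Comparing `F z` with `F` at the point `(1 - t) x ⊕ t z` and dividing by `1 - t`.
  have key : ∀ t ∈ Set.Ioo (0 : ℝ) 1, F z + t * dist x z ^ 2 ≤ F x := by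
    intro t ht
    have hgeo := (hz (G.geo x z t)).trans
      (G.sum_mul_dist_geo_sq_le a hw hsum x z (Set.Ioo_subset_Icc_self ht))
    have h1t : 0 < 1 - t := sub_pos.2 ht.2
    nlinarith
  have hlim : Tendsto (fun t => F z + t * dist x z ^ 2) (𝓝[<] 1) (𝓝 (F z + 1 * dist x z ^ 2)) :=
    ((continuous_const.add (continuous_id.mul continuous_const)).tendsto 1).mono_left
      nhdsWithin_le_nhds
  simpa using le_of_tendsto hlim
    (eventually_of_mem (Ioo_mem_nhdsLT zero_lt_one) key)

/-- Indexed from `0`: `inductiveMean y k` is the mean of `y 0, …, y k`, the paper's `S_{k+1}`. -/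
noncomputable def inductiveMean (y : ℕ → H) : ℕ → H
  | 0 => y 0
  | k + 1 => G.geo (inductiveMean y k) (y (k + 1)) (1 / ((k : ℝ) + 2))

theorem inductiveMean_congr {y y' : ℕ → H} {k : ℕ} (h : ∀ j ≤ k, y j = y' j) :
    G.inductiveMean y k = G.inductiveMean y' k := by
  induction k with
  | zero => exact h 0 le_rfl
  | succ k ih =>
    rw [inductiveMean, inductiveMean, ih fun j hj => h j (hj.trans k.le_succ), h (k + 1) le_rfl]

theorem eq_inductiveMean_of_recursion {s y : ℕ → H} (h1 : s 1 = y 1)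
    (hrec : ∀ k, 1 ≤ k → s (k + 1) = G.geo (s k) (y (k + 1)) (1 / ((k : ℝ) + 1))) (k : ℕ) :
    s (k + 1) = G.inductiveMean (fun j => y (j + 1)) k := by
  induction k with
  | zero => exact h1
  | succ k ih =>
    rw [hrec (k + 1) le_add_self, ih, inductiveMean]
    push_cast
    ring_nf

theorem exists_inductiveMean_comp_eq {Ω ι : Type*} (a : ι → H) (J : ℕ → Ω → ι) (k : ℕ) :
    ∃ Φ : (Finset.range (k + 1) → ι) → H,
      ∀ ω, G.inductiveMean (fun j => a (J j ω)) k = Φ fun i => J i ω := by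
  refine ⟨fun v => G.inductiveMean
    (fun j => if h : j ∈ Finset.range (k + 1) then a (v ⟨j, h⟩) else a (v ⟨0, by simp⟩)) k,
    fun ω => G.inductiveMean_congr fun j hj => ?_⟩
  rw [dif_pos (Finset.mem_range_succ_iff.2 hj)]

theorem dist_inductiveMean_le {y : ℕ → H} {z : H} {r : ℝ} (hy : ∀ j, dist (y j) z ≤ r) (k : ℕ) :
    dist (G.inductiveMean y k) z ≤ r := by
  induction k with
  | zero => exact hy 0
  | succ k ih => exact G.dist_geo_le (one_div_add_two_mem_Icc k) ih (hy _)

theorem dist_inductiveMean_succ_le {y : ℕ → H} {z : H} {r : ℝ} (hy : ∀ j, dist (y j) z ≤ r)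
    (k : ℕ) : dist (G.inductiveMean y (k + 1)) (G.inductiveMean y k) ≤ 2 * r / (k + 1) := by
  have hd : dist (G.inductiveMean y k) (y (k + 1)) ≤ 2 * r := by
    linarith [dist_triangle_right (G.inductiveMean y k) (y (k + 1)) z,
      G.dist_inductiveMean_le hy k, hy (k + 1)]
  calc dist (G.inductiveMean y (k + 1)) (G.inductiveMean y k)
      = 1 / ((k : ℝ) + 2) * dist (G.inductiveMean y k) (y (k + 1)) :=
        G.dist_geo_left (x := G.inductiveMean y k) (one_div_add_two_mem_Icc k)
    _ ≤ 1 / ((k : ℝ) + 1) * (2 * r) := by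
        gcongr
        · linarith
    _ = 2 * r / (k + 1) := by ring

end Hadamard

theorem dist_le_mul_div_of_dist_succ_le {X : Type*} [PseudoMetricSpace X] {u : ℕ → X} {C : ℝ}
    (hu : ∀ k, dist (u (k + 1)) (u k) ≤ C / (k + 1)) {l k : ℕ} (hlk : l ≤ k) :
    dist (u l) (u k) ≤ (k - l) * (C / (l + 1)) := by
  calc dist (u l) (u k) ≤ ∑ i ∈ Finset.Ico l k, dist (u i) (u (i + 1)) := dist_le_Ico_sum_dist u hlk
    _ ≤ ∑ _i ∈ Finset.Ico l k, C / (l + 1) := by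
        refine Finset.sum_le_sum fun i hi => ?_
        have hC : 0 ≤ C := by simpa using dist_nonneg.trans (hu 0)
        rw [dist_comm]
        refine (hu i).trans (div_le_div_of_nonneg_left hC (by positivity) ?_)
        exact_mod_cast Nat.succ_le_succ (Finset.mem_Ico.1 hi).1
    _ = (k - l) * (C / (l + 1)) := by simp [Nat.cast_sub hlk]

theorem tendsto_of_dist_succ_le_of_tendsto_sq {X : Type*} [PseudoMetricSpace X] {u : ℕ → X}
    {x : X} {C : ℝ} (hu : ∀ k, dist (u (k + 1)) (u k) ≤ C / (k + 1))
    (hsq : Tendsto (fun m => u (m ^ 2)) atTop (𝓝 x)) : Tendsto u atTop (𝓝 x) := by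
  have hC : 0 ≤ C := by simpa using dist_nonneg.trans (hu 0)
  have hblock : ∀ k, dist (u k) x ≤ dist (u (k.sqrt ^ 2)) x + 4 * C / (k.sqrt + 1) := by
    intro k
    have hs : k.sqrt ^ 2 ≤ k := by simpa [sq] using k.sqrt_le
    have hk : (k : ℝ) - k.sqrt ^ 2 ≤ 2 * k.sqrt := by
      have : k + 1 ≤ (k.sqrt + 1) ^ 2 := by simpa [sq] using k.lt_succ_sqrt
      have : (k : ℝ) + 1 ≤ (k.sqrt + 1) ^ 2 := by exact_mod_cast this
      nlinarith
    have hfar := dist_le_mul_div_of_dist_succ_le hu hs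
    have hnear : ((k : ℝ) - (k.sqrt ^ 2 : ℕ)) * (C / ((k.sqrt ^ 2 : ℕ) + 1))
        ≤ 4 * C / (k.sqrt + 1) := by
      calc ((k : ℝ) - (k.sqrt ^ 2 : ℕ)) * (C / ((k.sqrt ^ 2 : ℕ) + 1))
          ≤ 2 * k.sqrt * (C / ((k.sqrt : ℝ) ^ 2 + 1)) := by
            push_cast; gcongr
        _ ≤ 4 * C / (k.sqrt + 1) := by
            rw [mul_div_assoc', div_le_div_iff₀ (by positivity) (by positivity)]
            nlinarith [sq_nonneg ((k.sqrt : ℝ) - 1), (k.sqrt).cast_nonneg (α := ℝ)]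
    linarith [dist_triangle (u k) (u (k.sqrt ^ 2)) x, dist_comm (u k) (u (k.sqrt ^ 2))]
  have hsqrt : Tendsto Nat.sqrt atTop atTop :=
    tendsto_atTop_atTop.2 fun b => ⟨b ^ 2, fun k hk => Nat.le_sqrt'.2 hk⟩
  have hbound : Tendsto (fun m : ℕ => dist (u (m ^ 2)) x + 4 * C / (m + 1)) atTop (𝓝 0) := by
    simpa using (tendsto_iff_dist_tendsto_zero.1 hsq).add
      (tendsto_const_div_atTop_nhds_zero_nat (4 * C) |>.comp (tendsto_add_atTop_nat 1) |>.congr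
        fun m => by simp)
  exact tendsto_iff_dist_tendsto_zero.2
    (squeeze_zero (fun _ => dist_nonneg) hblock (hbound.comp hsqrt))

section Probability

variable {Ω β γ : Type*} [MeasurableSpace Ω] [MeasurableSpace β] [MeasurableSpace γ]
  {μ : Measure Ω} [IsFiniteMeasure μ] {V : Ω → β} {X : Ω → γ} {F : β × γ → ℝ}

theorem ProbabilityTheory.IndepFun.integrable_prod_of_integrable_comp (hVX : IndepFun V X μ)
    (hV : Measurable V) (hX : Measurable X) (hF : Measurable F)
    (hint : Integrable (fun ω => F (V ω, X ω)) μ) :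
    Integrable F ((μ.map V).prod (μ.map X)) := by
  rw [← (indepFun_iff_map_prod_eq_prod_map_map hV.aemeasurable hX.aemeasurable).1 hVX]
  exact (integrable_map_measure hF.aestronglyMeasurable (hV.prodMk hX).aemeasurable).2 hint

theorem ProbabilityTheory.IndepFun.integral_comp_eq_integral_integral (hVX : IndepFun V X μ)
    (hV : Measurable V) (hX : Measurable X) (hF : Measurable F)
    (hint : Integrable (fun ω => F (V ω, X ω)) μ) :
    ∫ ω, F (V ω, X ω) ∂μ = ∫ ω, ∫ ω', F (V ω, X ω') ∂μ ∂μ := by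
  have hinner : ∀ v, ∫ y, F (v, y) ∂(μ.map X) = ∫ ω', F (v, X ω') ∂μ := fun v =>
    integral_map hX.aemeasurable (hF.comp measurable_prodMk_left).aestronglyMeasurable
  calc ∫ ω, F (V ω, X ω) ∂μ = ∫ p, F p ∂(μ.map fun ω => (V ω, X ω)) :=
        (integral_map (hV.prodMk hX).aemeasurable hF.aestronglyMeasurable).symm
    _ = ∫ v, ∫ y, F (v, y) ∂(μ.map X) ∂(μ.map V) := by
        rw [(indepFun_iff_map_prod_eq_prod_map_map hV.aemeasurable hX.aemeasurable).1 hVX,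
          integral_prod _ (hVX.integrable_prod_of_integrable_comp hV hX hF hint)]
    _ = ∫ ω, ∫ ω', F (V ω, X ω') ∂μ ∂μ := by
        rw [integral_map hV.aemeasurable
          hF.stronglyMeasurable.integral_prod_right'.aestronglyMeasurable]
        simp_rw [hinner]

theorem ProbabilityTheory.IndepFun.integrable_integral_comp (hVX : IndepFun V X μ)
    (hV : Measurable V) (hX : Measurable X) (hF : Measurable F)
    (hint : Integrable (fun ω => F (V ω, X ω)) μ) :
    Integrable (fun ω => ∫ ω', F (V ω, X ω') ∂μ) μ := by
  have h := (hVX.integrable_prod_of_integrable_comp hV hX hF hint).integral_prod_left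
    |>.comp_measurable hV
  refine h.congr (ae_of_all _ fun ω => ?_)
  exact integral_map hX.aemeasurable (hF.comp measurable_prodMk_left).aestronglyMeasurable

end Probability

theorem MeasureTheory.ae_tendsto_zero_of_summable_integral {Ω : Type*} [MeasurableSpace Ω]
    {μ : Measure Ω} {f : ℕ → Ω → ℝ} (hf : ∀ n ω, 0 ≤ f n ω) (hint : ∀ n, Integrable (f n) μ)
    (hsum : Summable fun n => ∫ ω, f n ω ∂μ) :
    ∀ᵐ ω ∂μ, Tendsto (fun n => f n ω) atTop (𝓝 0) := by
  have hmeas : ∀ n, AEMeasurable (fun ω => ENNReal.ofReal (f n ω)) μ := fun n =>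
    (hint n).aemeasurable.ennreal_ofReal
  have hfin : ∫⁻ ω, ∑' n, ENNReal.ofReal (f n ω) ∂μ ≠ ⊤ := by
    rw [lintegral_tsum hmeas]
    simp_rw [← ofReal_integral_eq_lintegral_ofReal (hint _) (ae_of_all _ (hf _))]
    rw [← ENNReal.ofReal_tsum_of_nonneg (fun n => integral_nonneg (hf n)) hsum]
    exact ENNReal.ofReal_ne_top
  filter_upwards [ae_lt_top' (AEMeasurable.tsum hmeas) hfin] with ω hω
  have h := (ENNReal.tendsto_toReal ENNReal.zero_ne_top).comp
    (ENNReal.tendsto_atTop_zero_of_tsum_ne_top hω.ne)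
  simpa [Function.comp_def, ENNReal.toReal_ofReal (hf _ ω)] using h

theorem measurable_invFun_of_finite {α ι : Type*} [MeasurableSpace α] [MeasurableSingletonClass α]
    [MeasurableSpace ι] [Nonempty ι] [Finite ι] (a : ι → α) :
    Measurable (Function.invFun a) := by
  classical
  refine measurable_to_countable' fun i => ?_
  have hsplit : Function.invFun a ⁻¹' {i} =
      (Function.invFun a ⁻¹' {i} ∩ Set.range a) ∪
        ((Set.range a)ᶜ ∩ {_y | Classical.choice ‹_› = i}) := by
    ext y
    by_cases hy : y ∈ Set.range a
    · simp [hy]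
    · simp [hy, Function.invFun_neg (show ¬∃ j, a j = y from hy)]
  rw [hsplit]
  exact (((Set.finite_range a).subset Set.inter_subset_right).measurableSet).union
    ((Set.finite_range a).measurableSet.compl.inter (MeasurableSet.const _))

theorem ae_invFun_apply_eq_of_map_eq_sum_smul_dirac {Ω α ι : Type*} [MeasurableSpace Ω]
    [MeasurableSpace α] [MeasurableSingletonClass α] [Fintype ι] [Nonempty ι] {μ : Measure Ω}
    (a : ι → α) (c : ι → ENNReal) {X : Ω → α} (hX : Measurable X)
    (hlaw : μ.map X = ∑ i, c i • Measure.dirac (a i)) :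
    ∀ᵐ ω ∂μ, a (Function.invFun a (X ω)) = X ω := by
  have hrange : ∀ᵐ y ∂(∑ i, c i • Measure.dirac (a i)), y ∈ Set.range a := by
    rw [ae_iff, Measure.coe_finsetSum, Finset.sum_apply]
    exact Finset.sum_eq_zero fun i _ => by simp [Measure.dirac_apply]
  rw [← hlaw] at hrange
  exact (ae_of_ae_map hX.aemeasurable hrange).mono fun ω hω => Function.invFun_eq hω

theorem MeasureTheory.integral_sum_smul_dirac {α ι : Type*} [MeasurableSpace α]
    [MeasurableSingletonClass α] [Fintype ι] (a : ι → α) {w : ι → ℝ} (hw : ∀ i, 0 ≤ w i)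
    (f : α → ℝ) :
    ∫ y, f y ∂(∑ i, ENNReal.ofReal (w i) • Measure.dirac (a i)) = ∑ i, w i * f (a i) := by
  rw [integral_finsetSum_measure fun i _ =>
    ((integrable_const (f (a i))).congr (ae_eq_dirac f).symm).smul_measure ENNReal.ofReal_ne_top]
  refine Finset.sum_congr rfl fun i _ => ?_
  rw [integral_smul_measure, integral_dirac, ENNReal.toReal_ofReal (hw i), smul_eq_mul]

theorem MeasureTheory.integrable_dist_sq_of_le {Ω X : Type*} [MeasurableSpace Ω]
    [PseudoMetricSpace X] {μ : Measure Ω} [IsFiniteMeasure μ] {f g : Ω → X}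
    (hfg : Measurable fun ω => dist (f ω) (g ω)) {C : ℝ} (h : ∀ ω, dist (f ω) (g ω) ≤ C) :
    Integrable (fun ω => dist (f ω) (g ω) ^ 2) μ :=
  Integrable.of_bound (hfg.pow_const 2).aestronglyMeasurable (C ^ 2) (ae_of_all _ fun ω => by
    simpa using pow_le_pow_left₀ dist_nonneg (h ω) 2)

namespace Hadamard

variable {H : Type*} [MetricSpace H] [MeasurableSpace H] (G : Hadamard H)
  {Ω : Type*} [MeasurableSpace Ω] {ι : Type*} [Finite ι] [MeasurableSpace ι]
  [MeasurableSingletonClass ι]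

theorem measurable_inductiveMean_comp {a : ι → H} {J : ℕ → Ω → ι} (hJ : ∀ j, Measurable (J j))
    (k : ℕ) : Measurable fun ω => G.inductiveMean (fun j => a (J j ω)) k := by
  obtain ⟨Φ, hΦ⟩ := G.exists_inductiveMean_comp_eq a J k
  simp_rw [hΦ]
  exact (measurable_of_countable Φ).comp (measurable_pi_lambda _ fun i => hJ i)

theorem indepFun_inductiveMean_comp {μ : Measure Ω} {a : ι → H} {J : ℕ → Ω → ι}
    (hJ : ∀ j, Measurable (J j)) (hind : iIndepFun J μ) (k : ℕ) :
    IndepFun (fun ω => G.inductiveMean (fun j => a (J j ω)) k) (J (k + 1)) μ := by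
  obtain ⟨Φ, hΦ⟩ := G.exists_inductiveMean_comp_eq a J k
  simp_rw [hΦ]
  exact (hind.indepFun_finset _ {k + 1} (by simp) hJ).comp (measurable_of_countable Φ)
    (measurable_pi_apply ⟨k + 1, Finset.mem_singleton_self _⟩)

variable [BorelSpace H] {μ : Measure Ω} [IsProbabilityMeasure μ]

theorem integral_dist_geo_sq_le (a : ι → H) {z : H} {σ2 B t : ℝ} {V : Ω → H} {J : Ω → ι}
    (hV : Measurable V) (hJ : Measurable J) (hVJ : IndepFun V J μ)
    (hgeo : Measurable fun ω => G.geo (V ω) (a (J ω)) t) (ht : t ∈ Set.Icc (0 : ℝ) 1)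
    (hVB : ∀ ω, dist (V ω) z ≤ B)
    (hvar : ∀ x, σ2 + dist x z ^ 2 ≤ ∫ ω, dist x (a (J ω)) ^ 2 ∂μ)
    (hσ2 : ∫ ω, dist z (a (J ω)) ^ 2 ∂μ ≤ σ2) :
    ∫ ω, dist (G.geo (V ω) (a (J ω)) t) z ^ 2 ∂μ ≤
      (1 - t) ^ 2 * ∫ ω, dist (V ω) z ^ 2 ∂μ + t ^ 2 * σ2 := by
  obtain ⟨R, hR⟩ := (Set.finite_range fun i => dist (a i) z).bddAbove
  have haR : ∀ ω, dist (a (J ω)) z ≤ R := fun ω => hR ⟨J ω, rfl⟩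
  have hdist_z : Measurable fun x : H => dist x z :=
    (continuous_id.dist continuous_const).measurable
  have hF : Measurable fun p : H × ι => dist p.1 (a p.2) ^ 2 :=
    measurable_from_prod_countable_left fun i =>
      ((continuous_id.dist continuous_const).measurable.pow_const 2 :
        Measurable fun x : H => dist x (a i) ^ 2)
  have hVz := integrable_dist_sq_of_le (μ := μ) (hdist_z.comp hV) hVB
  have hzX : Integrable (fun ω => dist z (a (J ω)) ^ 2) μ :=
    integrable_dist_sq_of_le ((measurable_of_countable fun i => dist z (a i)).comp hJ)
      fun ω => (dist_comm z _).trans_le (haR ω)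
  have hVX : Integrable (fun ω => dist (V ω) (a (J ω)) ^ 2) μ :=
    Integrable.of_bound (hF.comp (hV.prodMk hJ)).aestronglyMeasurable ((B + R) ^ 2)
      (ae_of_all _ fun ω => by
        have := dist_triangle_right (V ω) (a (J ω)) z
        simpa using pow_le_pow_left₀ dist_nonneg (this.trans (add_le_add (hVB ω) (haR ω))) 2)
  have hgz := integrable_dist_sq_of_le (μ := μ) (hdist_z.comp hgeo)
    fun ω => G.dist_geo_le ht ((hVB ω).trans (le_max_left B R)) ((haR ω).trans (le_max_right B R))
  -- By independence, `𝔼 d(V, a ∘ J)²` is `𝔼 d(v, a ∘ J)²` averaged over `v = V`, and `hvar`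
  -- bounds the latter for each `v`.
  have hcross : σ2 + ∫ ω, dist (V ω) z ^ 2 ∂μ ≤ ∫ ω, dist (V ω) (a (J ω)) ^ 2 ∂μ := by
    calc σ2 + ∫ ω, dist (V ω) z ^ 2 ∂μ = ∫ ω, (σ2 + dist (V ω) z ^ 2) ∂μ := by
          rw [integral_add (integrable_const σ2) hVz, integral_const, probReal_univ, one_smul]
      _ ≤ ∫ ω, ∫ ω', dist (V ω) (a (J ω')) ^ 2 ∂μ ∂μ :=
          integral_mono ((integrable_const σ2).add hVz)
            (hVJ.integrable_integral_comp hV hJ hF hVX) fun ω => hvar (V ω)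
      _ = ∫ ω, dist (V ω) (a (J ω)) ^ 2 ∂μ :=
          (hVJ.integral_comp_eq_integral_integral hV hJ hF hVX).symm
  have hcat : ∫ ω, dist (G.geo (V ω) (a (J ω)) t) z ^ 2 ∂μ ≤
      (1 - t) * ∫ ω, dist (V ω) z ^ 2 ∂μ + t * ∫ ω, dist z (a (J ω)) ^ 2 ∂μ
        - t * (1 - t) * ∫ ω, dist (V ω) (a (J ω)) ^ 2 ∂μ := by
    have hsum : Integrable (fun ω => (1 - t) * dist (V ω) z ^ 2 + t * dist z (a (J ω)) ^ 2) μ :=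
      (hVz.const_mul _).add (hzX.const_mul _)
    calc ∫ ω, dist (G.geo (V ω) (a (J ω)) t) z ^ 2 ∂μ
        ≤ ∫ ω, ((1 - t) * dist (V ω) z ^ 2 + t * dist z (a (J ω)) ^ 2
            - t * (1 - t) * dist (V ω) (a (J ω)) ^ 2) ∂μ :=
          integral_mono hgz (hsum.sub (hVX.const_mul _)) fun ω => by
            simpa only [dist_comm z] using G.cat0 z (V ω) (a (J ω)) t ht
      _ = _ := by
          rw [integral_sub hsum (hVX.const_mul _), integral_add (hVz.const_mul _) (hzX.const_mul _),
            integral_const_mul, integral_const_mul, integral_const_mul]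
  have ht' : 0 ≤ t * (1 - t) := mul_nonneg ht.1 (sub_nonneg.2 ht.2)
  nlinarith [mul_le_mul_of_nonneg_left hσ2 ht.1, mul_le_mul_of_nonneg_left hcross ht']

theorem integral_dist_inductiveMean_sq_le {a : ι → H} {J : ℕ → Ω → ι}
    (hJ : ∀ j, Measurable (J j)) (hind : iIndepFun J μ) {z : H} {σ2 : ℝ}
    (hvar : ∀ j x, σ2 + dist x z ^ 2 ≤ ∫ ω, dist x (a (J j ω)) ^ 2 ∂μ)
    (hσ2 : ∀ j, ∫ ω, dist z (a (J j ω)) ^ 2 ∂μ ≤ σ2) (k : ℕ) :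
    ∫ ω, dist (G.inductiveMean (fun j => a (J j ω)) k) z ^ 2 ∂μ ≤ σ2 / (k + 1) := by
  obtain ⟨R, hR⟩ := (Set.finite_range fun i => dist (a i) z).bddAbove
  induction k with
  | zero => simpa [inductiveMean, dist_comm] using hσ2 0
  | succ k ih =>
    calc ∫ ω, dist (G.inductiveMean (fun j => a (J j ω)) (k + 1)) z ^ 2 ∂μ
        ≤ (1 - 1 / ((k : ℝ) + 2)) ^ 2 * ∫ ω, dist (G.inductiveMean (fun j => a (J j ω)) k) z ^ 2 ∂μ
            + (1 / ((k : ℝ) + 2)) ^ 2 * σ2 :=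
          G.integral_dist_geo_sq_le a (G.measurable_inductiveMean_comp hJ k) (hJ (k + 1))
            (G.indepFun_inductiveMean_comp hJ hind k) (G.measurable_inductiveMean_comp hJ (k + 1))
            (one_div_add_two_mem_Icc k)
            (fun ω => G.dist_inductiveMean_le (fun j => hR ⟨J j ω, rfl⟩) k)
            (hvar (k + 1)) (hσ2 (k + 1))
      _ ≤ (1 - 1 / ((k : ℝ) + 2)) ^ 2 * (σ2 / (k + 1)) + (1 / ((k : ℝ) + 2)) ^ 2 * σ2 := by
          gcongr
      _ = σ2 / ((k + 1 : ℕ) + 1) := by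
          push_cast
          field_simp
          ring

theorem ae_tendsto_inductiveMean {a : ι → H} {J : ℕ → Ω → ι}
    (hJ : ∀ j, Measurable (J j)) (hind : iIndepFun J μ) {z : H} {σ2 : ℝ}
    (hvar : ∀ j x, σ2 + dist x z ^ 2 ≤ ∫ ω, dist x (a (J j ω)) ^ 2 ∂μ)
    (hσ2 : ∀ j, ∫ ω, dist z (a (J j ω)) ^ 2 ∂μ ≤ σ2) :
    ∀ᵐ ω ∂μ, Tendsto (fun k => G.inductiveMean (fun j => a (J j ω)) k) atTop (𝓝 z) := by
  obtain ⟨R, hR⟩ := (Set.finite_range fun i => dist (a i) z).bddAbove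
  have haR : ∀ ω j, dist (a (J j ω)) z ≤ R := fun ω j => hR ⟨J j ω, rfl⟩
  have hσ2_nonneg : 0 ≤ σ2 := (integral_nonneg fun _ => sq_nonneg _).trans (hσ2 0)
  have hsq : ∀ᵐ ω ∂μ, Tendsto (fun m => dist (G.inductiveMean (fun j => a (J j ω)) (m ^ 2)) z ^ 2)
      atTop (𝓝 0) := by
    refine ae_tendsto_zero_of_summable_integral (fun _ _ => sq_nonneg _)
      (fun m => integrable_dist_sq_of_le
        ((continuous_id.dist continuous_const).measurable.comp
          (G.measurable_inductiveMean_comp hJ _))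
        fun ω => G.dist_inductiveMean_le (haR ω) _) ?_
    refine ((Real.summable_one_div_nat_pow.2 one_lt_two).mul_left σ2)
      |>.of_norm_bounded_eventually_nat ?_
    filter_upwards [eventually_ne_atTop 0] with m hm
    rw [Real.norm_of_nonneg (integral_nonneg fun _ => sq_nonneg _)]
    refine (G.integral_dist_inductiveMean_sq_le hJ hind hvar hσ2 _).trans ?_
    rw [mul_one_div]
    gcongr
    · push_cast; linarith
  filter_upwards [hsq] with ω hω
  refine tendsto_of_dist_succ_le_of_tendsto_sq (G.dist_inductiveMean_succ_le (haR ω))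
    (tendsto_iff_dist_tendsto_zero.2 ?_)
  simpa [Real.sqrt_sq dist_nonneg] using hω.sqrt

end Hadamard

theorem lln_hadamard_sturm_general
    {H : Type*} [MetricSpace H]
    [MeasurableSpace H] [BorelSpace H]
    (G : Hadamard H)
    {Ω : Type*} {m0 : MeasurableSpace Ω} {μ : Measure Ω} [IsProbabilityMeasure μ]
    (N : ℕ) (a : Fin N → H) (w : Fin N → ℝ)
    (hw : ∀ n, 0 < w n) (hsum : ∑ n, w n = 1)
    (Ξ : H)
    (hΞ : ∀ x : H, ∑ n, w n * dist Ξ (a n) ^ 2 ≤ ∑ n, w n * dist x (a n) ^ 2)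
    (Y : ℕ → Ω → H) (hY_meas : ∀ k, Measurable (Y k))
    (hY_indep : iIndepFun Y μ)
    (hY_law : ∀ k : ℕ, 1 ≤ k →
      Measure.map (Y k) μ = ∑ n, ENNReal.ofReal (w n) • Measure.dirac (a n))
    (S : ℕ → Ω → H)
    (hS1 : ∀ ω, S 1 ω = Y 1 ω)
    (hSrec : ∀ k : ℕ, 1 ≤ k → ∀ ω : Ω,
      S (k + 1) ω = G.geo (S k ω) (Y (k + 1) ω) (1 / ((k : ℝ) + 1))) :
    ∀ᵐ ω ∂μ, Tendsto (fun k => S k ω) atTop (𝓝 Ξ) := by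
  have hw0 : ∀ n, 0 ≤ w n := fun n => (hw n).le
  have : Nonempty (Fin N) := ⟨⟨0, Nat.pos_of_ne_zero fun hN => by subst hN; simp at hsum⟩⟩
  -- `a (J j)` is a copy of `Y (j + 1)` with a `Fin N`-valued index, equal to it almost surely.
  set J : ℕ → Ω → Fin N := fun j => Function.invFun a ∘ Y (j + 1)
  have hJ : ∀ j, Measurable (J j) := fun j => (measurable_invFun_of_finite a).comp (hY_meas _)
  have hJY : ∀ᵐ ω ∂μ, ∀ j, a (J j ω) = Y (j + 1) ω := ae_all_iff.2 fun j =>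
    ae_invFun_apply_eq_of_map_eq_sum_smul_dirac a _ (hY_meas _) (hY_law _ le_add_self)
  have hmean : ∀ j x, ∫ ω, dist x (a (J j ω)) ^ 2 ∂μ = ∑ n, w n * dist x (a n) ^ 2 := by
    intro j x
    rw [integral_congr_ae (hJY.mono fun ω hω => by rw [hω j]),
      ← integral_map (f := fun y => dist x y ^ 2) (hY_meas _).aemeasurable
        ((continuous_const.dist continuous_id).measurable.pow_const 2).aestronglyMeasurable,
      hY_law (j + 1) le_add_self, integral_sum_smul_dirac a hw0]
  have hlim := G.ae_tendsto_inductiveMean hJ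
    ((hY_indep.precomp Nat.succ_injective).comp _ fun _ => measurable_invFun_of_finite a)
    (fun j x => (hmean j x).symm ▸ G.sum_mul_dist_sq_add_dist_sq_le a hw0 hsum hΞ x)
    (fun j => (hmean j Ξ).le)
  have hSJ : ∀ᵐ ω ∂μ, ∀ k, S (k + 1) ω = G.inductiveMean (fun j => a (J j ω)) k := by
    filter_upwards [hJY] with ω hω k
    simpa only [hω] using G.eq_inductiveMean_of_recursion (s := (S · ω)) (y := (Y · ω))
      (hS1 ω) (fun k hk => hSrec k hk ω) k
  filter_upwards [hlim, hSJ] with ω hω hSω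
  exact (tendsto_add_atTop_iff_nat 1).1 (hω.congr fun k => (hSω k).symm)

/-- Law of large numbers in Hadamard spaces (Sturm): the inductive means `S_k`
converge almost surely to the Fréchet mean `Ξ`. -/
theorem lln_hadamard_sturm
    {H : Type*} [MetricSpace H] [CompleteSpace H]
    [MeasurableSpace H] [BorelSpace H]
    (G : Hadamard H)
    {Ω : Type*} {m0 : MeasurableSpace Ω} {μ : Measure Ω} [IsProbabilityMeasure μ]
    (N : ℕ) (a : Fin N → H) (w : Fin N → ℝ)
    (hw : ∀ n, 0 < w n) (hsum : ∑ n, w n = 1)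
    (Ξ : H)
    (hΞ : ∀ x : H, ∑ n, w n * dist Ξ (a n) ^ 2 ≤ ∑ n, w n * dist x (a n) ^ 2)
    (Y : ℕ → Ω → H) (hY_meas : ∀ k, Measurable (Y k))
    (hY_indep : iIndepFun Y μ)
    (hY_law : ∀ k : ℕ, 1 ≤ k →
      Measure.map (Y k) μ = ∑ n, ENNReal.ofReal (w n) • Measure.dirac (a n))
    (S : ℕ → Ω → H)
    (hS1 : ∀ ω, S 1 ω = Y 1 ω)
    (hSrec : ∀ k : ℕ, 1 ≤ k → ∀ ω : Ω,
      S (k + 1) ω = G.geo (S k ω) (Y (k + 1) ω) (1 / ((k : ℝ) + 1))) :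
    ∀ᵐ ω ∂μ, Tendsto (fun k => S k ω) atTop (𝓝 Ξ) :=
  lln_hadamard_sturm_general G (m0 := m0) N a w hw hsum Ξ hΞ Y hY_meas hY_indep hY_law S hS1 hSrec
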